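/- Let C₁ be a channel from a finite set X₁ to a finite set Y₁ of traces and C₂ a channel from a finite set X₂ to a finite set Y₂ of traces. Assume that for all y₁, y₁' ∈ Y₁ and y₂, y₂' ∈ Y₂, if Int(y₁,y₂) ∩ Int(y₁',y₂') ≠ ∅ then y₁ = y₁' and y₂ = y₂'. Then for every prior π on X₁×X₂ and every scheduler S on Y₁, Y₂, the min-entropy leakage of the scheduled composition equals that of the parallel composition: L(π, Comp_S(C₁,C₂)) = L(π, C₁×C₂); equivalently, the posterior vulnerabilities coincide. -/
import Mathlib


open scoped Classical BigOperators

noncomputable section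

/-- A (row-stochastic) channel matrix whose outputs range over a finite set `Ys`. -/
def FIsChannel {X B : Type*} (Ys : Finset B) (C : X → B → ℝ) : Prop :=
  (∀ x y, 0 ≤ C x y) ∧ ∀ x, ∑ y ∈ Ys, C x y = 1

/-- A prior (probability distribution). -/
def IsPrior {X : Type*} [Fintype X] (π : X → ℝ) : Prop :=
  (∀ x, 0 ≤ π x) ∧ ∑ x, π x = 1

/-- Cascade composition of channels (matrix product), outputs of the first ranging
over the finite set `Ys`. -/
def Fcascade {X B Z : Type*} (Ys : Finset B) (C : X → B → ℝ) (D : B → Z → ℝ) :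
    X → Z → ℝ :=
  fun x z => ∑ y ∈ Ys, C x y * D y z

/-- Mutual information (base-2), with `0`-probability terms taken to be `0`. -/
def FMI {X B : Type*} [Fintype X] (π : X → ℝ) (Ys : Finset B) (C : X → B → ℝ) : ℝ :=
  ∑ x, ∑ y ∈ Ys, if π x * C x y = 0 then 0
    else π x * C x y * Real.logb 2 (C x y / ∑ x', π x' * C x' y)

/-- Prior vulnerability. -/
def Vprior {X : Type*} [Fintype X] [Nonempty X] (π : X → ℝ) : ℝ :=
  Finset.univ.sup' Finset.univ_nonempty π

/-- Posterior vulnerability. -/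
def FVpost {X B : Type*} [Fintype X] [Nonempty X]
    (π : X → ℝ) (Ys : Finset B) (C : X → B → ℝ) : ℝ :=
  ∑ y ∈ Ys, Finset.univ.sup' Finset.univ_nonempty (fun x => π x * C x y)

/-- Min-entropy leakage. -/
def FMEL {X B : Type*} [Fintype X] [Nonempty X]
    (π : X → ℝ) (Ys : Finset B) (C : X → B → ℝ) : ℝ :=
  Real.logb 2 (FVpost π Ys C) - Real.logb 2 (Vprior π)

/-- Min-capacity: supremum of min-entropy leakage over all priors. -/
def FMinCap {X B : Type*} [Fintype X] [Nonempty X] (Ys : Finset B) (C : X → B → ℝ) : ℝ :=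
  sSup {l : ℝ | ∃ π : X → ℝ, IsPrior π ∧ l = FMEL π Ys C}

/-- All interleavings (shuffles) of two traces. -/
def interleavings {A : Type*} : List A → List A → List (List A)
  | [], ys => [ys]
  | x :: xs, [] => [x :: xs]
  | x :: xs, y :: ys =>
      ((interleavings xs (y :: ys)).map (x :: ·)) ++
        ((interleavings (x :: xs) ys).map (y :: ·))
termination_by l₁ l₂ => l₁.length + l₂.length

/-- The interleaving `Int(y₁, y₂)` of two traces, as a finite set. -/
def IntF {A : Type*} [DecidableEq A] (y₁ y₂ : List A) : Finset (List A) :=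
  (interleavings y₁ y₂).toFinset

/-- The interleaving `Int(Y₁, Y₂)` of two finite sets of traces. -/
def IntSet {A : Type*} [DecidableEq A] (Y₁ Y₂ : Finset (List A)) : Finset (List A) :=
  Y₁.biUnion fun y₁ => Y₂.biUnion fun y₂ => IntF y₁ y₂

/-- A scheduler on `Y₁`, `Y₂`: for each pair of traces it yields a probability
distribution supported on their interleavings. -/
def IsScheduler {A : Type*} [DecidableEq A] (Y₁ Y₂ : Finset (List A))
    (S : List A → List A → List A → ℝ) : Prop :=
  ∀ y₁ ∈ Y₁, ∀ y₂ ∈ Y₂,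
    (∀ y, 0 ≤ S y₁ y₂ y) ∧ (∀ y, y ∉ IntF y₁ y₂ → S y₁ y₂ y = 0) ∧
      ∑ y ∈ IntF y₁ y₂, S y₁ y₂ y = 1

/-- The scheduled composition of two channels with respect to a scheduler. -/
def Comp {A X₁ X₂ : Type*} (Y₁ Y₂ : Finset (List A))
    (C₁ : X₁ → List A → ℝ) (C₂ : X₂ → List A → ℝ)
    (S : List A → List A → List A → ℝ) : X₁ × X₂ → List A → ℝ :=
  fun x y => ∑ y₁ ∈ Y₁, ∑ y₂ ∈ Y₂, C₁ x.1 y₁ * C₂ x.2 y₂ * S y₁ y₂ y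

/-- The (disjoint) parallel composition of two channels. -/
def Par {A X₁ X₂ : Type*} (C₁ : X₁ → List A → ℝ) (C₂ : X₂ → List A → ℝ) :
    X₁ × X₂ → List A × List A → ℝ :=
  fun x y => C₁ x.1 y.1 * C₂ x.2 y.2

lemma mul_sup'_aux {ι : Type*} (s : Finset ι) (hs : s.Nonempty) (c : ℝ) (hc : 0 ≤ c)
    (f : ι → ℝ) : c * s.sup' hs f = s.sup' hs (fun i => c * f i) :=
  Finset.comp_sup'_eq_sup'_comp hs (fun t => c * t) (fun a b => mul_max_of_nonneg a b hc)

/-- if distinct pairs of component traces have disjoint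
interleavings, then scheduled composition has the same min-entropy leakage
(equivalently the same posterior vulnerability) as parallel composition, for
every scheduler. -/
theorem scheduled_eq_parallel_MEL_of_disjoint_interleavings
    {A X₁ X₂ : Type*} [DecidableEq A] [Fintype X₁] [Fintype X₂]
    [Nonempty X₁] [Nonempty X₂]
    (Y₁ Y₂ : Finset (List A))
    (C₁ : X₁ → List A → ℝ) (C₂ : X₂ → List A → ℝ)
    (hC₁ : FIsChannel Y₁ C₁) (hC₂ : FIsChannel Y₂ C₂)
    (hdisj : ∀ y₁ ∈ Y₁, ∀ y₁' ∈ Y₁, ∀ y₂ ∈ Y₂, ∀ y₂' ∈ Y₂,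
      (IntF y₁ y₂ ∩ IntF y₁' y₂').Nonempty → y₁ = y₁' ∧ y₂ = y₂')
    (π : X₁ × X₂ → ℝ) (hπ : IsPrior π)
    (S : List A → List A → List A → ℝ) (hS : IsScheduler Y₁ Y₂ S) :
    FMEL π (IntSet Y₁ Y₂) (Comp Y₁ Y₂ C₁ C₂ S) = FMEL π (Y₁ ×ˢ Y₂) (Par C₁ C₂) ∧
      FVpost π (IntSet Y₁ Y₂) (Comp Y₁ Y₂ C₁ C₂ S) = FVpost π (Y₁ ×ˢ Y₂) (Par C₁ C₂) := by
  have hkey : FVpost π (IntSet Y₁ Y₂) (Comp Y₁ Y₂ C₁ C₂ S)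
      = FVpost π (Y₁ ×ˢ Y₂) (Par C₁ C₂) := by
    have hIset : IntSet Y₁ Y₂ = (Y₁ ×ˢ Y₂).biUnion (fun p => IntF p.1 p.2) := by
      ext y
      simp only [IntSet, Finset.mem_biUnion, Finset.mem_product, Prod.exists]
      constructor
      · rintro ⟨y₁, h₁, y₂, h₂, hy⟩; exact ⟨y₁, y₂, ⟨h₁, h₂⟩, hy⟩
      · rintro ⟨y₁, y₂, ⟨h₁, h₂⟩, hy⟩; exact ⟨y₁, h₁, y₂, h₂, hy⟩
    have hpd : ∀ p ∈ Y₁ ×ˢ Y₂, ∀ q ∈ Y₁ ×ˢ Y₂, p ≠ q →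
        Disjoint (IntF p.1 p.2) (IntF q.1 q.2) := by
      intro p hp q hq hne
      by_contra h
      rw [Finset.not_disjoint_iff_nonempty_inter] at h
      obtain ⟨h1, h2⟩ := Finset.mem_product.mp hp
      obtain ⟨h3, h4⟩ := Finset.mem_product.mp hq
      obtain ⟨e1, e2⟩ := hdisj _ h1 _ h3 _ h2 _ h4 h
      exact hne (Prod.ext e1 e2)
    rw [FVpost, FVpost, hIset, Finset.sum_biUnion hpd]
    apply Finset.sum_congr rfl
    intro p hp
    obtain ⟨h1, h2⟩ := Finset.mem_product.mp hp
    obtain ⟨hS0, hSsupp, hSsum⟩ := hS p.1 h1 p.2 h2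
    have hcomp : ∀ y ∈ IntF p.1 p.2, ∀ x : X₁ × X₂,
        Comp Y₁ Y₂ C₁ C₂ S x y = C₁ x.1 p.1 * C₂ x.2 p.2 * S p.1 p.2 y := by
      intro y hy x
      have hz : ∀ y₁ ∈ Y₁, ∀ y₂ ∈ Y₂, (y₁, y₂) ≠ p → S y₁ y₂ y = 0 := by
        intro y₁ hy₁ y₂ hy₂ hne
        obtain ⟨_, hsupp', _⟩ := hS y₁ hy₁ y₂ hy₂
        apply hsupp'
        intro hy'
        obtain ⟨e1, e2⟩ := hdisj y₁ hy₁ p.1 h1 y₂ hy₂ p.2 h2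
          ⟨y, Finset.mem_inter.mpr ⟨hy', hy⟩⟩
        exact hne (Prod.ext e1 e2)
      unfold Comp
      rw [Finset.sum_eq_single_of_mem p.1 h1]
      · rw [Finset.sum_eq_single_of_mem p.2 h2]
        intro y₂ hy₂ hne
        rw [hz p.1 h1 y₂ hy₂ (by simp [Prod.ext_iff, hne]), mul_zero]
      · intro y₁ hy₁ hne
        apply Finset.sum_eq_zero
        intro y₂ hy₂
        rw [hz y₁ hy₁ y₂ hy₂ (by simp [Prod.ext_iff, hne]), mul_zero]
    calc ∑ y ∈ IntF p.1 p.2,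
          Finset.univ.sup' Finset.univ_nonempty
            (fun x => π x * Comp Y₁ Y₂ C₁ C₂ S x y)
        = ∑ y ∈ IntF p.1 p.2, S p.1 p.2 y *
            Finset.univ.sup' Finset.univ_nonempty (fun x => π x * Par C₁ C₂ x p) := by
          apply Finset.sum_congr rfl
          intro y hy
          rw [mul_sup'_aux _ Finset.univ_nonempty _ (hS0 y)]
          apply Finset.sup'_congr _ rfl
          intro x _
          simp only [Function.comp, hcomp y hy x, Par]
          ring
      _ = (∑ y ∈ IntF p.1 p.2, S p.1 p.2 y) *
            Finset.univ.sup' Finset.univ_nonempty (fun x => π x * Par C₁ C₂ x p) := by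
          rw [Finset.sum_mul]
      _ = Finset.univ.sup' Finset.univ_nonempty (fun x => π x * Par C₁ C₂ x p) := by
          rw [hSsum, one_mul]
  exact ⟨by rw [FMEL, FMEL, hkey], hkey⟩
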